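/- Let P ⊆ ℝ be a finite point set with all pairwise distances between distinct pairs of points distinct, let 1 ≤ r ≤ |P|−1, and let M and M' be two r-multipackings of P. List the elements of M in increasing order as a_{g_1} < a_{g_2} < ⋯ < a_{g_m} and those of M' as a_{h_1} < a_{h_2} < ⋯ < a_{h_{m'}}. Suppose t is an index with t ≤ m and t ≤ m' such that a_{g_i} = a_{h_i} for all i < t and a_{g_t} < a_{h_t}. Then the set M'' = {a_{g_1}, …, a_{g_t}} ∪ {a_{h_{t+1}}, …, a_{h_{m'}}} is also an r-multipacking of P. -/

import Mathlib

open scoped Classical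

/-- All pairwise distances between distinct pairs of points of `P` are distinct. -/
def DistinctDistances {α : Type*} [MetricSpace α] (P : Finset α) : Prop :=
  ∀ a ∈ P, ∀ b ∈ P, ∀ c ∈ P, ∀ d ∈ P, a ≠ b → c ≠ d →
    ¬((a = c ∧ b = d) ∨ (a = d ∧ b = c)) → dist a b ≠ dist c d

/-- `N` is the closed neighborhood `N_s[v]`: `v` together with the `s` points of `P`
nearest to `v`. -/
def IsNbhd {α : Type*} [MetricSpace α] (P : Finset α) (v : α) (s : ℕ) (N : Finset α) : Prop :=
  N ⊆ P ∧ v ∈ N ∧ N.card = s + 1 ∧ ∀ a ∈ N, ∀ b ∈ P, b ∉ N → dist v a < dist v b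

/-- `M` is an `r`-multipacking of `P`: `M ⊆ P` and for every `v ∈ P` and every
`1 ≤ s ≤ r`, `|N_s[v] ∩ M| ≤ (s+1)/2`. -/
def IsMultipackingR {α : Type*} [MetricSpace α] (P : Finset α) (r : ℕ) (M : Finset α) : Prop :=
  M ⊆ P ∧ ∀ v ∈ P, ∀ s : ℕ, 1 ≤ s → s ≤ r → ∀ N : Finset α, IsNbhd P v s N →
    2 * (N ∩ M).card ≤ s + 1

/-- `M` is a multipacking of `P`, i.e. an `(n-1)`-multipacking where `n = |P|`. -/
def IsMultipacking {α : Type*} [MetricSpace α] (P : Finset α) (M : Finset α) : Prop :=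
  IsMultipackingR P (P.card - 1) M

/-!
Write `g = a_{g_t}`, `h = a_{h_t}` and `M''` for the exchanged set. The points of `M''` below `g`
form the common prefix, so `M'' = (M' \ {h}) ∪ {g}`, its points `≤ g` lie in `M`, and its points
`> g` lie above `h`. A neighbourhood `N` on the line is an interval of `P`. If `N` contains no
point of `M''` above `g`, then `N ∩ M'' ⊆ N ∩ M`. Otherwise `N` contains a point above `h`, so
whenever `g ∈ N` also `h ∈ N`, and swapping `g` for `h` injects `N ∩ M''` into `N ∩ M'`.
-/

lemma Finset.card_le_card_of_erase_subset_erase {α : Type*} [DecidableEq α] {s t : Finset α}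
    {a b : α} (hst : s.erase a ⊆ t.erase b) (hab : a ∈ s → b ∈ t) : s.card ≤ t.card := by
  by_cases ha : a ∈ s
  · have hcard := Finset.card_le_card hst
    rw [Finset.card_erase_of_mem ha, Finset.card_erase_of_mem (hab ha)] at hcard
    have hs : 0 < s.card := Finset.card_pos.2 ⟨a, ha⟩
    have ht : 0 < t.card := Finset.card_pos.2 ⟨b, hab ha⟩
    omega
  · rw [Finset.erase_eq_of_notMem ha] at hst
    exact (Finset.card_le_card hst).trans (Finset.card_erase_le)

lemma Finset.mem_of_lt_orderEmbOfFin_of_prefix {α : Type*} [LinearOrder α] {M M' : Finset α}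
    {m m' t : ℕ} (hm : M.card = m) (hm' : M'.card = m') (htm : t < m) (htm' : t < m')
    (heq : ∀ i : ℕ, (hi : i < t) →
      M.orderEmbOfFin hm ⟨i, hi.trans htm⟩ = M'.orderEmbOfFin hm' ⟨i, hi.trans htm'⟩)
    {x : α} (hx : x ∈ M) (hxt : x < M.orderEmbOfFin hm ⟨t, htm⟩) : x ∈ M' := by
  obtain ⟨j, rfl⟩ : x ∈ Set.range (M.orderEmbOfFin hm) := by
    rwa [Finset.range_orderEmbOfFin]
  have hjt : (j : ℕ) < t := (M.orderEmbOfFin hm).lt_iff_lt.1 hxt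
  rw [show j = ⟨j, hjt.trans htm⟩ from rfl, heq j hjt]
  exact Finset.orderEmbOfFin_mem _ _ _

lemma IsNbhd.mem_of_le_of_le {P N : Finset ℝ} {v : ℝ} {s : ℕ} (hN : IsNbhd P v s N)
    {a b x : ℝ} (ha : a ∈ N) (hb : b ∈ N) (hx : x ∈ P) (hax : a ≤ x) (hxb : x ≤ b) :
    x ∈ N := by
  by_contra hxN
  have hax' := hN.2.2.2 a ha x hx hxN
  have hbx' := hN.2.2.2 b hb x hx hxN
  rw [Real.dist_eq, Real.dist_eq] at hax' hbx'
  rcases le_total v x with hvx | hxv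
  · rw [abs_of_nonpos (by linarith), abs_of_nonpos (by linarith)] at hbx'
    linarith
  · rw [abs_of_nonneg (by linarith), abs_of_nonneg (by linarith)] at hax'
    linarith

lemma IsMultipackingR.of_exchange {P M M' S : Finset ℝ} {r : ℕ} (hM : IsMultipackingR P r M)
    (hM' : IsMultipackingR P r M') {g h : ℝ} (hgh : g < h) (hh : h ∈ M')
    (hS_le : ∀ x ∈ S, x ≤ g → x ∈ M) (hS_gt : ∀ x ∈ S, g < x → h < x)
    (hS_erase : S.erase g ⊆ M'.erase h) : IsMultipackingR P r S := by
  have hSP : S ⊆ P := fun x hx => by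
    by_cases hxg : x = g
    · exact hM.1 (hS_le x hx hxg.le)
    · exact hM'.1 (Finset.mem_of_mem_erase (hS_erase (Finset.mem_erase.2 ⟨hxg, hx⟩)))
  refine ⟨hSP, fun v hv s hs1 hsr N hN => ?_⟩
  by_cases hhigh : ∃ b ∈ N ∩ S, g < b
  · obtain ⟨b, hb, hgb⟩ := hhigh
    have hbN := (Finset.mem_inter.1 hb).1
    have hcard : (N ∩ S).card ≤ (N ∩ M').card := by
      refine Finset.card_le_card_of_erase_subset_erase (a := g) (b := h) ?_ fun hg => ?_
      · rw [← Finset.inter_erase, ← Finset.inter_erase]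
        exact Finset.inter_subset_inter_left hS_erase
      · have hhN := hN.mem_of_le_of_le (Finset.mem_inter.1 hg).1 hbN (hM'.1 hh) hgh.le
          (hS_gt b (Finset.mem_inter.1 hb).2 hgb).le
        exact Finset.mem_inter.2 ⟨hhN, hh⟩
    have := hM'.2 v hv s hs1 hsr N hN
    omega
  · push Not at hhigh
    have hsub : N ∩ S ⊆ N ∩ M := fun x hx =>
      Finset.mem_inter.2 ⟨(Finset.mem_inter.1 hx).1, hS_le x (Finset.mem_inter.1 hx).2 (hhigh x hx)⟩
    have := hM.2 v hv s hs1 hsr N hN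
    have := Finset.card_le_card hsub
    omega

theorem multipacking_exchange_general (P : Finset ℝ)
    (r : ℕ)
    (M M' : Finset ℝ) (hMP : IsMultipackingR P r M) (hMP' : IsMultipackingR P r M')
    (m m' : ℕ) (hm : M.card = m) (hm' : M'.card = m')
    (t : ℕ) (htm : t < m) (htm' : t < m')
    (heq : ∀ i : ℕ, (hi : i < t) →
      M.orderEmbOfFin hm ⟨i, hi.trans htm⟩ = M'.orderEmbOfFin hm' ⟨i, hi.trans htm'⟩)
    (hlt : M.orderEmbOfFin hm ⟨t, htm⟩ < M'.orderEmbOfFin hm' ⟨t, htm'⟩) :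
    IsMultipackingR P r
      ((M.filter fun x => x ≤ M.orderEmbOfFin hm ⟨t, htm⟩) ∪
       (M'.filter fun x => M'.orderEmbOfFin hm' ⟨t, htm'⟩ < x)) := by
  set g := M.orderEmbOfFin hm ⟨t, htm⟩
  set h := M'.orderEmbOfFin hm' ⟨t, htm'⟩
  have hprefix : ∀ x ∈ M, x < g → x ∈ M' :=
    fun x hx hxg => Finset.mem_of_lt_orderEmbOfFin_of_prefix hm hm' htm htm' heq hx hxg
  refine hMP.of_exchange hMP' hlt (Finset.orderEmbOfFin_mem _ _ _) ?_ ?_ ?_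
  · intro x hx hxg
    simp only [Finset.mem_union, Finset.mem_filter] at hx
    rcases hx with hx | hx
    · exact hx.1
    · linarith [hx.2]
  · intro x hx hgx
    simp only [Finset.mem_union, Finset.mem_filter] at hx
    rcases hx with hx | hx
    · linarith [hx.2]
    · exact hx.2
  · intro x hx
    simp only [Finset.mem_erase, Finset.mem_union, Finset.mem_filter] at hx ⊢
    rcases hx with ⟨hxg, ⟨hxM, hxle⟩ | ⟨hxM', hhx⟩⟩
    · have hxlt := lt_of_le_of_ne hxle hxg
      exact ⟨(hxlt.trans hlt).ne, hprefix x hxM hxlt⟩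
    · exact ⟨hhx.ne', hxM'⟩

/-- Exchange lemma for `r`-multipackings on the line: if `M` and `M'` are two
`r`-multipackings listed in increasing order as `a_{g_1} < ⋯ < a_{g_m}` and
`a_{h_1} < ⋯ < a_{h_{m'}}`, agreeing up to position `t` (here `0`-indexed: equal at all
indices `< t`) with `a_{g_t} < a_{h_t}` at position `t`, then
`{a_{g_1}, …, a_{g_t}} ∪ {a_{h_{t+1}}, …, a_{h_{m'}}}` is also an `r`-multipacking. -/
theorem multipacking_exchange (P : Finset ℝ) (hd : DistinctDistances P)
    (r : ℕ) (hr1 : 1 ≤ r) (hr2 : r ≤ P.card - 1)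
    (M M' : Finset ℝ) (hMP : IsMultipackingR P r M) (hMP' : IsMultipackingR P r M')
    (m m' : ℕ) (hm : M.card = m) (hm' : M'.card = m')
    (t : ℕ) (htm : t < m) (htm' : t < m')
    (heq : ∀ i : ℕ, (hi : i < t) →
      M.orderEmbOfFin hm ⟨i, hi.trans htm⟩ = M'.orderEmbOfFin hm' ⟨i, hi.trans htm'⟩)
    (hlt : M.orderEmbOfFin hm ⟨t, htm⟩ < M'.orderEmbOfFin hm' ⟨t, htm'⟩) :
    IsMultipackingR P r
      ((M.filter fun x => x ≤ M.orderEmbOfFin hm ⟨t, htm⟩) ∪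
       (M'.filter fun x => M'.orderEmbOfFin hm' ⟨t, htm'⟩ < x)) :=
  multipacking_exchange_general P r M M' hMP hMP' m m' hm hm' t htm htm' heq hlt
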